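/- arXiv:math/0507175 — 2 statements merged into one kernel-verified Lean document; each statement's English description precedes it below -/
import Mathlib

section
/- (Howlett) Let (W, S) be a Coxeter system, let J, K ⊆ S, and let w̄ ∈ ᴶW ∩ Wᴷ. Set K' = K ∩ (w̄⁻¹ J w̄). Then every element w of the double coset W_J · w̄ · W_K can be uniquely written in the form w = u · w̄ · v with u ∈ W_J and v ∈ W_K ∩ ᴷ'W; moreover, for this decomposition one has w̄ · v ∈ ᴶW and ℓ(w) = ℓ(u) + ℓ(w̄) + ℓ(v). -/
open CoxeterSystem

variable {B W : Type*} [Group W] {M : CoxeterMatrix B}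

/-- The strong Bruhat order on a Coxeter group: the reflexive-transitive closure of the
relation relating `a` to `a * t` where `t` is a reflection and the length increases. -/
def bruhatLE (cs : CoxeterSystem M W) (u v : W) : Prop :=
  Relation.ReflTransGen
    (fun a b => ∃ t : W, cs.IsReflection t ∧ b = a * t ∧ cs.length a < cs.length b) u v

/-- `ᴶW`: the set of `w` with `ℓ(s w) > ℓ(w)` for all `s ∈ J`, i.e. the minimal length
representatives of the cosets `W_J \ W`. Here `J` is a set of simple reflections of `W`. -/
def minLeft (cs : CoxeterSystem M W) (J : Set W) : Set W :=
  {w | ∀ s ∈ J, cs.length w < cs.length (s * w)}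

/-- `Wᴶ`: the set of `w` with `ℓ(w s) > ℓ(w)` for all `s ∈ J`, i.e. the minimal length
representatives of the cosets `W / W_J`. -/
def minRight (cs : CoxeterSystem M W) (J : Set W) : Set W :=
  {w | ∀ s ∈ J, cs.length w < cs.length (w * s)}

/-!
The strong exchange condition comes from the parity representation of `W` on `W × ZMod 2`, in
which `s` sends `(u, z)` to `(s u s, z + [u = s])`; the braid relations hold because the
reflections met along the word `(s s')^m` come in pairs. Its second coordinate is a cocycle
`parityCocycle` whose value at `(w, w⁻¹ t w)` is both the parity of the number of occurrences of
`t` in the left inversion sequence of any word for `w` and the indicator of `ℓ (t w) < ℓ w`. The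
cocycle identity then says that a left inversion `t` of `x y` is a left inversion of `x`, or
`x⁻¹ t x` is one of `y`. By induction on a reduced word of `c ∈ W_I`, this gives
`ℓ (c m) = ℓ c + ℓ m` for `m` of minimal length in `W_I m`, and every `v ∈ ᴵW` is such an `m`.

For Howlett's lemma, suppose `s ∈ J` shortens `w̄ v`. It does not shorten `w̄`, so
`t = w̄⁻¹ s w̄` shortens `v ∈ W_K`, hence lies in `W_K`; as `w̄ t = s w̄`, length additivity on
`w̄ W_K` gives `ℓ t = 1`, so `t ∈ K'`, contradicting `v ∈ ᴷ'W`. Thus `w̄ v ∈ ᴶW`, and the length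
formula and uniqueness follow from length additivity on `W_J (w̄ v)` and on `w̄ W_K`. For
existence, write `b = c v` with `v` of minimal length in `W_{K'} b` and move `w̄ c w̄⁻¹ ∈ W_J`
to the left.
-/

section ParityStep

open scoped Classical

variable {G : Type*} [Group G]

noncomputable def parityStep (a : G) : Equiv.Perm (G × ZMod 2) :=
  Equiv.prodShear (MulAut.conj a).toEquiv fun u => Equiv.addRight (if u = a then 1 else 0)

theorem parityStep_apply (a u : G) (z : ZMod 2) :
    parityStep a (u, z) = (a * u * a⁻¹, z + if u = a then 1 else 0) :=
  rfl

theorem parityStep_mul_parityStep_pow_apply {a b : G} (ha : a * a = 1) (hb : b * b = 1)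
    (k : ℕ) (u : G) (z : ZMod 2) :
    ((parityStep a * parityStep b) ^ k) (u, z) =
      ((a * b) ^ k * u * ((a * b) ^ k)⁻¹,
        z + ∑ n ∈ Finset.range (2 * k), if u = (b * a) ^ n * b then 1 else 0) := by
  induction k with
  | zero => simp
  | succ k ih =>
    have conj_eq_iff (g x y : G) : g * x * g⁻¹ = y ↔ x = g⁻¹ * y * g := by
      constructor <;> rintro rfl <;> group
    have hinv : ((a * b) ^ k)⁻¹ = (b * a) ^ k := by
      rw [← inv_pow, mul_inv_rev, inv_eq_of_mul_eq_one_right ha, inv_eq_of_mul_eq_one_right hb]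
    have hshift : b * (a * b) ^ k = (b * a) ^ k * b :=
      SemiconjBy.pow_right (by simp only [SemiconjBy, mul_assoc]) k
    have hconj_b : ((a * b) ^ k)⁻¹ * b * (a * b) ^ k = (b * a) ^ (2 * k) * b := by
      rw [hinv, mul_assoc, hshift, two_mul, pow_add, mul_assoc]
    have hconj_bab : ((a * b) ^ k)⁻¹ * (b⁻¹ * a * b) * (a * b) ^ k = (b * a) ^ (2 * k + 1) * b := by
      rw [hinv, inv_eq_of_mul_eq_one_right hb, mul_assoc, mul_assoc, hshift,
        show 2 * k + 1 = k + 1 + k by ring, pow_add, pow_succ]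
      simp only [mul_assoc]
    rw [pow_succ', Equiv.Perm.mul_apply, ih, Equiv.Perm.mul_apply, parityStep_apply,
      parityStep_apply, show 2 * (k + 1) = 2 * k + 1 + 1 by ring, Finset.sum_range_succ,
      Finset.sum_range_succ]
    refine Prod.ext ?_ ?_
    · rw [pow_succ', mul_inv_rev, mul_inv_rev]
      simp only [mul_assoc]
    · simp only [conj_eq_iff, hconj_b, hconj_bab]
      ring

theorem parityStep_mul_parityStep_pow_eq_one {a b : G} (ha : a * a = 1) (hb : b * b = 1) {m : ℕ}
    (hm : (a * b) ^ m = 1) : (parityStep a * parityStep b) ^ m = 1 := by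
  have hm' : (b * a) ^ m = 1 := by
    rw [← inv_eq_one, ← inv_pow, mul_inv_rev, inv_eq_of_mul_eq_one_right ha,
      inv_eq_of_mul_eq_one_right hb, hm]
  ext ⟨u, z⟩ : 1
  rw [parityStep_mul_parityStep_pow_apply ha hb, hm, two_mul, Finset.sum_range_add]
  simp [pow_add, hm', CharTwo.add_self_eq_zero]

end ParityStep

theorem conj_mem_closure_of_mem_closure_inter_image {G : Type*} [Group G] {J K : Set G} {g x : G}
    (hx : x ∈ Subgroup.closure (K ∩ (fun y => g⁻¹ * y * g) '' J)) :
    g * x * g⁻¹ ∈ Subgroup.closure J := by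
  have hmap : (Subgroup.closure (K ∩ (fun y => g⁻¹ * y * g) '' J)).map (MulAut.conj g).toMonoidHom
      ≤ Subgroup.closure J := by
    rw [MonoidHom.map_closure]
    refine Subgroup.closure_mono ?_
    rintro _ ⟨x, ⟨-, y, hy, rfl⟩, rfl⟩
    simpa [mul_assoc] using hy
  exact hmap ⟨x, hx, rfl⟩

namespace CoxeterSystem

open scoped Classical

variable (cs : CoxeterSystem M W)

local prefix:100 "s" => cs.simple
local prefix:100 "π" => cs.wordProd
local prefix:100 "ℓ" => cs.length

noncomputable def parityRep : W →* Equiv.Perm (W × ZMod 2) :=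
  cs.lift ⟨fun i => parityStep (s i), fun i i' =>
    parityStep_mul_parityStep_pow_eq_one (cs.simple_mul_simple_self i)
      (cs.simple_mul_simple_self i') (cs.simple_mul_simple_pow i i')⟩

noncomputable def parityCocycle (w u : W) : ZMod 2 :=
  (cs.parityRep w (u, 0)).2

theorem parityRep_simple (i : B) : cs.parityRep (s i) = parityStep (s i) :=
  cs.lift_apply_simple _ i

theorem parityRep_apply (w u : W) (z : ZMod 2) :
    cs.parityRep w (u, z) = (w * u * w⁻¹, z + cs.parityCocycle w u) := by
  induction w using cs.simple_induction_left generalizing u z with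
  | one => simp [parityCocycle]
  | mul_simple_left w i ih =>
    have hmul (z : ZMod 2) : cs.parityRep (s i * w) (u, z) =
        (s i * w * u * (s i * w)⁻¹,
          z + cs.parityCocycle w u + if w * u * w⁻¹ = s i then 1 else 0) := by
      rw [map_mul, Equiv.Perm.mul_apply, ih, parityRep_simple, parityStep_apply]
      ext
      · simp only [mul_inv_rev, mul_assoc]
      · rfl
    have hcocycle : cs.parityCocycle (s i * w) u =
        cs.parityCocycle w u + if w * u * w⁻¹ = s i then 1 else 0 := by
      rw [parityCocycle, hmul, zero_add]
    rw [hmul, hcocycle, add_assoc]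

theorem parityCocycle_mul (x y u : W) :
    cs.parityCocycle (x * y) u = cs.parityCocycle y u + cs.parityCocycle x (y * u * y⁻¹) := by
  rw [parityCocycle, map_mul, Equiv.Perm.mul_apply, parityRep_apply, parityRep_apply, zero_add]

theorem parityCocycle_simple (i : B) (u : W) :
    cs.parityCocycle (s i) u = if u = s i then 1 else 0 := by
  rw [parityCocycle, parityRep_simple, parityStep_apply, zero_add]

theorem parityCocycle_one (u : W) : cs.parityCocycle 1 u = 0 := by
  rw [parityCocycle, map_one]
  rfl

theorem parityCocycle_self {t : W} (ht : cs.IsReflection t) : cs.parityCocycle t t = 1 := by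
  obtain ⟨w, i, rfl⟩ := ht
  have hcancel := cs.parityCocycle_mul w w⁻¹ (w * s i * w⁻¹)
  rw [mul_inv_cancel, parityCocycle_one, show w⁻¹ * (w * s i * w⁻¹) * w⁻¹⁻¹ = s i by group] at hcancel
  rw [parityCocycle_mul, parityCocycle_mul, parityCocycle_simple,
    show w⁻¹ * (w * s i * w⁻¹) * w⁻¹⁻¹ = s i by group, if_pos rfl,
    show s i * s i * (s i)⁻¹ = s i by group]
  linear_combination -hcancel

theorem count_leftInvSeq (ω : List B) (t : W) :
    ((cs.leftInvSeq ω).count t : ZMod 2) = cs.parityCocycle (π ω) ((π ω)⁻¹ * t * π ω) := by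
  induction ω generalizing t with
  | nil => simp [parityCocycle_one]
  | cons i ω ih =>
    have hcount : (List.map (MulAut.conj (s i)) (cs.leftInvSeq ω)).count t =
        (cs.leftInvSeq ω).count ((s i)⁻¹ * t * s i) := by
      conv_lhs => rw [← (MulAut.conj (s i)).apply_symm_apply t]
      rw [List.count_map_of_injective _ _ (MulAut.conj (s i)).injective, MulAut.conj_symm_apply]
    have hsimple : (s i)⁻¹ * t * s i = s i ↔ s i = t := by
      rw [mul_eq_right, inv_mul_eq_one]
    rw [leftInvSeq, List.count_cons, hcount, Nat.cast_add, ih, wordProd_cons, parityCocycle_mul,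
      parityCocycle_simple,
      show (s i * π ω)⁻¹ * t * (s i * π ω) = (π ω)⁻¹ * ((s i)⁻¹ * t * s i) * π ω by group,
      show π ω * ((π ω)⁻¹ * ((s i)⁻¹ * t * s i) * π ω) * (π ω)⁻¹ = (s i)⁻¹ * t * s i by group]
    simp only [beq_iff_eq, hsimple, Nat.cast_ite, Nat.cast_one, Nat.cast_zero]

theorem mem_leftInvSeq_of_parityCocycle_eq_one {ω : List B} {t : W}
    (h : cs.parityCocycle (π ω) ((π ω)⁻¹ * t * π ω) = 1) : t ∈ cs.leftInvSeq ω := by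
  rw [← count_leftInvSeq] at h
  exact List.count_pos_iff.mp (Nat.pos_of_ne_zero fun h₀ => by simp [h₀] at h)

theorem isLeftInversion_of_parityCocycle_eq_one {w t : W}
    (h : cs.parityCocycle w (w⁻¹ * t * w) = 1) : cs.IsLeftInversion w t := by
  obtain ⟨ω, hω, rfl⟩ := cs.exists_isReduced w
  exact cs.isLeftInversion_of_mem_leftInvSeq hω (cs.mem_leftInvSeq_of_parityCocycle_eq_one h)

theorem parityCocycle_eq_one_iff {w t : W} (ht : cs.IsReflection t) :
    cs.parityCocycle w (w⁻¹ * t * w) = 1 ↔ cs.IsLeftInversion w t := by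
  refine ⟨cs.isLeftInversion_of_parityCocycle_eq_one, fun h => ?_⟩
  by_contra hne
  have hflip : cs.parityCocycle (t * w) ((t * w)⁻¹ * t * (t * w)) = 1 := by
    rw [parityCocycle_mul, show w * ((t * w)⁻¹ * t * (t * w)) * w⁻¹ = t by group,
      cs.parityCocycle_self ht, show (t * w)⁻¹ * t * (t * w) = w⁻¹ * t * w by group]
    revert hne
    generalize cs.parityCocycle w (w⁻¹ * t * w) = a
    decide +revert
  have hlt := (cs.isLeftInversion_of_parityCocycle_eq_one hflip).2
  rw [← mul_assoc, ht.mul_self, one_mul] at hlt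
  exact absurd h.2 (by omega)

theorem mem_leftInvSeq_of_isLeftInversion {ω : List B} {t : W}
    (h : cs.IsLeftInversion (π ω) t) : t ∈ cs.leftInvSeq ω :=
  cs.mem_leftInvSeq_of_parityCocycle_eq_one ((cs.parityCocycle_eq_one_iff h.1).mpr h)

theorem exists_eraseIdx_of_isLeftInversion {ω : List B} {t : W}
    (h : cs.IsLeftInversion (π ω) t) : ∃ j < ω.length, t * π ω = π (ω.eraseIdx j) := by
  obtain ⟨j, hj, rfl⟩ := List.getElem_of_mem (cs.mem_leftInvSeq_of_isLeftInversion h)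
  refine ⟨j, by simpa using hj, ?_⟩
  rw [← cs.getD_leftInvSeq_mul_wordProd, List.getD_eq_getElem]

theorem isLeftInversion_or_of_isLeftInversion_mul {x y t : W} (h : cs.IsLeftInversion (x * y) t) :
    cs.IsLeftInversion x t ∨ cs.IsLeftInversion y (x⁻¹ * t * x) := by
  have ht' : cs.IsReflection (x⁻¹ * t * x) := by simpa using h.1.conj x⁻¹
  have hsum := (cs.parityCocycle_eq_one_iff h.1).mpr h
  rw [parityCocycle_mul, show y * ((x * y)⁻¹ * t * (x * y)) * y⁻¹ = x⁻¹ * t * x by group,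
    show (x * y)⁻¹ * t * (x * y) = y⁻¹ * (x⁻¹ * t * x) * y by group] at hsum
  rw [← cs.parityCocycle_eq_one_iff h.1, ← cs.parityCocycle_eq_one_iff ht']
  revert hsum
  generalize cs.parityCocycle x (x⁻¹ * t * x) = a
  generalize cs.parityCocycle y (y⁻¹ * (x⁻¹ * t * x) * y) = b
  decide +revert

section Parabolic

variable {I : Set W}

theorem wordProd_mem_closure {ω : List B} (hω : ∀ i ∈ ω, s i ∈ I) :
    π ω ∈ Subgroup.closure I :=
  list_prod_mem (l := ω.map cs.simple) fun x hx => by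
    obtain ⟨i, hi, rfl⟩ := List.mem_map.mp hx
    exact Subgroup.subset_closure (hω i hi)

theorem exists_reduced_word_of_mem_closure (hI : I ⊆ Set.range cs.simple) {w : W}
    (hw : w ∈ Subgroup.closure I) :
    ∃ ω : List B, cs.IsReduced ω ∧ (∀ i ∈ ω, s i ∈ I) ∧ w = π ω := by
  have hmul_left (i : B) (hi : s i ∈ I) (ω : List B) (hω : cs.IsReduced ω) (hωI : ∀ j ∈ ω, s j ∈ I) :
      ∃ ω' : List B, cs.IsReduced ω' ∧ (∀ j ∈ ω', s j ∈ I) ∧ s i * π ω = π ω' := by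
    rcases cs.length_simple_mul (π ω) i with hlen | hlen
    · refine ⟨i :: ω, ?_, by simpa [hi] using hωI, (cs.wordProd_cons i ω).symm⟩
      rw [IsReduced, wordProd_cons, hlen, hω, List.length_cons]
    · obtain ⟨j, hj, heq⟩ :=
        cs.exists_eraseIdx_of_isLeftInversion (ω := ω) ⟨cs.isReflection_simple i, by omega⟩
      refine ⟨ω.eraseIdx j, ?_, fun k hk => hωI k ((List.eraseIdx_sublist _ _).subset hk), heq⟩
      rw [IsReduced, ← heq, List.length_eraseIdx_of_lt hj, ← hω]
      omega
  induction hw using Subgroup.closure_induction_left with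
  | one => exact ⟨[], by simp [IsReduced], by simp, rfl⟩
  | mul_left x hx y _ ih =>
    obtain ⟨ω, hω, hωI, rfl⟩ := ih
    obtain ⟨i, rfl⟩ := hI hx
    exact hmul_left i hx ω hω hωI
  | inv_mul_cancel x hx y _ ih =>
    obtain ⟨ω, hω, hωI, rfl⟩ := ih
    obtain ⟨i, rfl⟩ := hI hx
    rw [inv_simple]
    exact hmul_left i hx ω hω hωI

theorem mem_of_mem_closure_of_length_eq_one (hI : I ⊆ Set.range cs.simple) {w : W}
    (hw : w ∈ Subgroup.closure I) (hlen : ℓ w = 1) : w ∈ I := by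
  obtain ⟨ω, hω, hωI, rfl⟩ := cs.exists_reduced_word_of_mem_closure hI hw
  obtain ⟨i, rfl⟩ := List.length_eq_one_iff.mp (hω.symm.trans hlen)
  simpa using hωI

theorem mem_closure_of_isLeftInversion (hI : I ⊆ Set.range cs.simple) {w t : W}
    (hw : w ∈ Subgroup.closure I) (h : cs.IsLeftInversion w t) : t ∈ Subgroup.closure I := by
  obtain ⟨ω, -, hωI, rfl⟩ := cs.exists_reduced_word_of_mem_closure hI hw
  obtain ⟨j, -, heq⟩ := cs.exists_eraseIdx_of_isLeftInversion h
  rw [eq_mul_inv_of_mul_eq heq]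
  exact mul_mem (cs.wordProd_mem_closure fun i hi => hωI i ((List.eraseIdx_sublist _ _).subset hi))
    (inv_mem (cs.wordProd_mem_closure hωI))

theorem exists_length_mul_lt_of_mem_closure (hI : I ⊆ Set.range cs.simple) {w : W}
    (hw : w ∈ Subgroup.closure I) (hne : w ≠ 1) : ∃ x ∈ I, ℓ (x * w) < ℓ w := by
  obtain ⟨_ | ⟨i, ω⟩, hω, hωI, rfl⟩ := cs.exists_reduced_word_of_mem_closure hI hw
  · exact absurd cs.wordProd_nil hne
  · refine ⟨s i, hωI i List.mem_cons_self, ?_⟩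
    rw [hω, wordProd_cons, simple_mul_simple_cancel_left, List.length_cons]
    exact Nat.lt_succ_of_le (cs.length_wordProd_le ω)

theorem length_wordProd_mul_of_forall_length_le {m : W}
    (hm : ∀ c ∈ Subgroup.closure I, ℓ m ≤ ℓ (c * m)) {ω : List B} (hω : cs.IsReduced ω)
    (hωI : ∀ i ∈ ω, s i ∈ I) : ℓ (π ω * m) = ω.length + ℓ m := by
  induction ω with
  | nil => simp
  | cons i ω ih =>
    have hω' : cs.IsReduced ω := by simpa using hω.drop 1
    have hωI' : ∀ j ∈ ω, s j ∈ I := fun j hj => hωI j (List.mem_cons_of_mem i hj)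
    have hnot : ¬ cs.IsLeftInversion (π ω * m) (s i) := fun hinv => by
      rcases cs.isLeftInversion_or_of_isLeftInversion_mul hinv with h | h
      · have hlen : ℓ (s i * π ω) = ω.length + 1 := by rw [← wordProd_cons, hω, List.length_cons]
        exact absurd h.2 (by rw [hlen, hω']; omega)
      · have hconj : (π ω)⁻¹ * s i * π ω ∈ Subgroup.closure I :=
          mul_mem (mul_mem (inv_mem (cs.wordProd_mem_closure hωI'))
            (Subgroup.subset_closure (hωI i List.mem_cons_self))) (cs.wordProd_mem_closure hωI')
        exact absurd (hm _ hconj) (not_le.mpr h.2)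
    rw [wordProd_cons, mul_assoc, List.length_cons]
    rcases cs.length_simple_mul (π ω * m) i with h | h
    · rw [h, ih hω' hωI']
      ring
    · exact absurd ⟨cs.isReflection_simple i, by omega⟩ hnot

theorem length_mul_of_forall_length_le (hI : I ⊆ Set.range cs.simple) {m c : W}
    (hm : ∀ c ∈ Subgroup.closure I, ℓ m ≤ ℓ (c * m)) (hc : c ∈ Subgroup.closure I) :
    ℓ (c * m) = ℓ c + ℓ m := by
  obtain ⟨ω, hω, hωI, rfl⟩ := cs.exists_reduced_word_of_mem_closure hI hc
  rw [hω, cs.length_wordProd_mul_of_forall_length_le hm hω hωI]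

theorem exists_forall_length_le_mul (I : Set W) (w : W) :
    ∃ c ∈ Subgroup.closure I, ∀ c' ∈ Subgroup.closure I, ℓ (c * w) ≤ ℓ (c' * (c * w)) := by
  obtain ⟨c, hc, hmin⟩ :=
    (measure fun c => ℓ (c * w)).wf.has_min (Subgroup.closure I : Set W) ⟨1, one_mem _⟩
  refine ⟨c, hc, fun c' hc' => ?_⟩
  rw [← mul_assoc]
  exact not_lt.mp (hmin (c' * c) (mul_mem hc' hc))

theorem mem_minLeft_of_forall_length_le (hI : I ⊆ Set.range cs.simple) {m : W}
    (hm : ∀ c ∈ Subgroup.closure I, ℓ m ≤ ℓ (c * m)) : m ∈ minLeft cs I := by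
  intro x hx
  obtain ⟨i, rfl⟩ := hI hx
  exact lt_of_le_of_ne (hm _ (Subgroup.subset_closure hx)) (cs.length_simple_mul_ne m i).symm

theorem exists_mem_closure_mul_mem_minLeft (hI : I ⊆ Set.range cs.simple) (w : W) :
    ∃ c ∈ Subgroup.closure I, ∃ v ∈ minLeft cs I, w = c * v := by
  obtain ⟨c, hc, hmin⟩ := cs.exists_forall_length_le_mul I w
  exact ⟨c⁻¹, inv_mem hc, c * w, cs.mem_minLeft_of_forall_length_le hI hmin, by group⟩

theorem length_mul_of_mem_minLeft (hI : I ⊆ Set.range cs.simple) {v c : W}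
    (hv : v ∈ minLeft cs I) (hc : c ∈ Subgroup.closure I) : ℓ (c * v) = ℓ c + ℓ v := by
  obtain ⟨c₀, hc₀, hmin⟩ := cs.exists_forall_length_le_mul I v
  suffices c₀ = 1 by simpa [this] using cs.length_mul_of_forall_length_le hI hmin hc
  by_contra hne
  obtain ⟨x, hx, hlt⟩ :=
    cs.exists_length_mul_lt_of_mem_closure hI (inv_mem hc₀) (inv_ne_one.mpr hne)
  have h₁ := cs.length_mul_of_forall_length_le hI hmin (inv_mem hc₀)
  have h₂ := cs.length_mul_of_forall_length_le hI hmin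
    (mul_mem (Subgroup.subset_closure hx) (inv_mem hc₀))
  rw [inv_mul_cancel_left] at h₁
  rw [mul_assoc, inv_mul_cancel_left] at h₂
  exact absurd (hv x hx) (by omega)

theorem eq_of_mul_eq_mul_of_mem_minLeft (hI : I ⊆ Set.range cs.simple) {u₁ u₂ v₁ v₂ : W}
    (hu₁ : u₁ ∈ Subgroup.closure I) (hu₂ : u₂ ∈ Subgroup.closure I) (hv₁ : v₁ ∈ minLeft cs I)
    (hv₂ : v₂ ∈ minLeft cs I) (h : u₁ * v₁ = u₂ * v₂) : u₁ = u₂ ∧ v₁ = v₂ := by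
  have h₁ : ℓ v₂ = ℓ (u₂⁻¹ * u₁) + ℓ v₁ := by
    rw [← cs.length_mul_of_mem_minLeft hI hv₁ (mul_mem (inv_mem hu₂) hu₁), mul_assoc, h,
      inv_mul_cancel_left]
  have h₂ : ℓ v₁ = ℓ (u₁⁻¹ * u₂) + ℓ v₂ := by
    rw [← cs.length_mul_of_mem_minLeft hI hv₂ (mul_mem (inv_mem hu₁) hu₂), mul_assoc, ← h,
      inv_mul_cancel_left]
  obtain rfl : u₁ = u₂ := (inv_mul_eq_one.mp (cs.length_eq_zero_iff.mp (by omega))).symm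
  exact ⟨rfl, mul_left_cancel h⟩

theorem length_mul_of_mem_minRight (hI : I ⊆ Set.range cs.simple) {w c : W}
    (hw : w ∈ minRight cs I) (hc : c ∈ Subgroup.closure I) : ℓ (w * c) = ℓ w + ℓ c := by
  have hw' : w⁻¹ ∈ minLeft cs I := by
    intro x hx
    obtain ⟨i, rfl⟩ := hI hx
    rw [← cs.inv_simple i, ← mul_inv_rev, length_inv, length_inv]
    exact hw _ hx
  rw [← length_inv, mul_inv_rev, cs.length_mul_of_mem_minLeft hI hw' (inv_mem hc), length_inv,
    length_inv, add_comm]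

end Parabolic

theorem mul_mem_minLeft {J K : Set W} (hJ : J ⊆ Set.range cs.simple)
    (hK : K ⊆ Set.range cs.simple) {w v : W} (hwJ : w ∈ minLeft cs J) (hwK : w ∈ minRight cs K)
    (hv : v ∈ Subgroup.closure K) (hvK : v ∈ minLeft cs (K ∩ (fun x => w⁻¹ * x * w) '' J)) :
    w * v ∈ minLeft cs J := by
  intro x hx
  obtain ⟨i, rfl⟩ := hJ hx
  by_contra hge
  have hinv : cs.IsLeftInversion (w * v) (s i) :=
    ⟨cs.isReflection_simple i, lt_of_le_of_ne (not_lt.mp hge) (cs.length_simple_mul_ne _ i)⟩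
  rcases cs.isLeftInversion_or_of_isLeftInversion_mul hinv with h | h
  · exact absurd (hwJ _ hx) (not_lt.mpr h.2.le)
  have htK : w⁻¹ * s i * w ∈ Subgroup.closure K := cs.mem_closure_of_isLeftInversion hK hv h
  have hlen : ℓ (w⁻¹ * s i * w) = 1 := by
    have h₁ := cs.length_mul_of_mem_minRight hK hwK htK
    rw [← mul_assoc, ← mul_assoc, mul_inv_cancel, one_mul] at h₁
    have h₂ := hwJ _ hx
    rcases cs.length_simple_mul w i with h₃ | h₃ <;> omega
  have ht : w⁻¹ * s i * w ∈ K ∩ (fun x => w⁻¹ * x * w) '' J :=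
    ⟨cs.mem_of_mem_closure_of_length_eq_one hK htK hlen, s i, hx, rfl⟩
  exact absurd (hvK _ ht) (not_lt.mpr h.2.le)

end CoxeterSystem

/-- Howlett's lemma: for `w̄ ∈ ᴶW ∩ Wᴷ` and `K' = K ∩ w̄⁻¹ J w̄`, every element of the
double coset `W_J w̄ W_K` can be uniquely written as `u * w̄ * v` with `u ∈ W_J` and
`v ∈ W_K ∩ ᴷ'W`; moreover then `w̄ * v ∈ ᴶW` and `ℓ(w) = ℓ(u) + ℓ(w̄) + ℓ(v)`. -/
theorem howlett (cs : CoxeterSystem M W) (J K : Set W)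
    (hJ : J ⊆ Set.range cs.simple) (hK : K ⊆ Set.range cs.simple)
    (wb : W) (hwb : wb ∈ minLeft cs J ∩ minRight cs K) (w : W)
    (hw : ∃ a ∈ Subgroup.closure J, ∃ b ∈ Subgroup.closure K, w = a * wb * b) :
    (∃! p : W × W, p.1 ∈ Subgroup.closure J ∧ p.2 ∈ Subgroup.closure K ∧
      p.2 ∈ minLeft cs (K ∩ ((fun x => wb⁻¹ * x * wb) '' J)) ∧ w = p.1 * wb * p.2) ∧
    (∀ u v : W, u ∈ Subgroup.closure J → v ∈ Subgroup.closure K →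
      v ∈ minLeft cs (K ∩ ((fun x => wb⁻¹ * x * wb) '' J)) → w = u * wb * v →
      wb * v ∈ minLeft cs J ∧
        cs.length w = cs.length u + cs.length wb + cs.length v) := by
  obtain ⟨hwbJ, hwbK⟩ := hwb
  set K' := K ∩ (fun x => wb⁻¹ * x * wb) '' J
  have hdecomp : ∀ u v : W, u ∈ Subgroup.closure J → v ∈ Subgroup.closure K →
      v ∈ minLeft cs K' → w = u * wb * v →
      wb * v ∈ minLeft cs J ∧ cs.length w = cs.length u + cs.length wb + cs.length v := by
    rintro u v hu hv hvK' rfl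
    have hmin := cs.mul_mem_minLeft hJ hK hwbJ hwbK hv hvK'
    refine ⟨hmin, ?_⟩
    rw [mul_assoc, cs.length_mul_of_mem_minLeft hJ hmin hu,
      cs.length_mul_of_mem_minRight hK hwbK hv, add_assoc]
  refine ⟨?_, hdecomp⟩
  obtain ⟨a, ha, b, hb, rfl⟩ := hw
  have hK' : K' ⊆ Set.range cs.simple := fun _ hx => hK hx.1
  obtain ⟨c, hc, v, hv, rfl⟩ := cs.exists_mem_closure_mul_mem_minLeft hK' b
  have hu : a * (wb * c * wb⁻¹) ∈ Subgroup.closure J :=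
    mul_mem ha (conj_mem_closure_of_mem_closure_inter_image hc)
  have hvK : v ∈ Subgroup.closure K := by
    simpa using mul_mem (inv_mem (Subgroup.closure_mono Set.inter_subset_left hc)) hb
  have hw : a * wb * (c * v) = a * (wb * c * wb⁻¹) * wb * v := by group
  refine ⟨(a * (wb * c * wb⁻¹), v), ⟨hu, hvK, hv, hw⟩, ?_⟩
  rintro ⟨u', v'⟩ ⟨hu', hv'K, hv'K', heq⟩
  obtain ⟨rfl, hvv⟩ := cs.eq_of_mul_eq_mul_of_mem_minLeft hJ hu' hu
    (hdecomp u' v' hu' hv'K hv'K' heq).1 (hdecomp _ v hu hvK hv hw).1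
    (by rw [← mul_assoc, ← mul_assoc, ← heq, hw])
  rw [mul_left_cancel hvv]
end

section
/- Let (W, S) be a Coxeter system and let x, w ∈ W. Then the set {y ∈ W : w·y ≤ x} contains a smallest element y_min and a largest element y_max with respect to the Bruhat order; moreover ℓ(y_min) = ℓ(w) − ℓ(w·y_min) and ℓ(y_max) = ℓ(w) + ℓ(w·y_max). -/
open CoxeterSystem

variable {B W : Type*} [Group W] {M : CoxeterMatrix B}

/-!
Write `max(u, s)` and `min(u, s)` for the Bruhat-larger and smaller of `u` and `u s`. By the
lifting property both are monotone, and `u ≤ max(x, s)` iff `min(u, s) ≤ x`, so the set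
`S(x) = {y | w y ≤ x}` satisfies `S(max(x, s)) = S(x) ∪ S(x) s`. Every `x` is built from `1`
by such steps, and `S(1) = {w⁻¹}`; if `S(x)` has least element `m` and greatest element `M`,
then `S(max(x, s))` has least element `min(m, s)` and greatest element `max(M, s)`, and the
length identities are preserved because `w m` cannot descend at `s` when `m` does (else
`m s ∈ S(x)`), and dually for `M`.

The lifting property rests on the strong exchange property, which comes from the sign
representation of `W` on `W × {±1}`: the parity of the number of occurrences of a reflection `t`
in the right inversion sequence of a word for `w` depends only on `w`.
-/

theorem conj_eq_iff {G : Type*} [Group G] (g u x : G) : g * u * g⁻¹ = x ↔ u = g⁻¹ * x * g := by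
  constructor <;> rintro rfl <;> group

namespace CoxeterSystem

open scoped Classical

variable (cs : CoxeterSystem M W)

local prefix:100 "s " => cs.simple
local prefix:100 "π " => cs.wordProd
local prefix:100 "ℓ " => cs.length
local prefix:100 "ris " => cs.rightInvSeq

theorem simple_conj_eq_iff (i : B) {u v : W} : s i * u * s i = v ↔ u = s i * v * s i := by
  constructor <;> rintro rfl <;> simp [mul_assoc, simple_mul_simple_cancel_left,
    simple_mul_simple_self]

noncomputable def signPerm (i : B) : Equiv.Perm (W × ℤˣ) :=
  Function.Involutive.toPerm (fun p => (s i * p.1 * s i, if p.1 = s i then -p.2 else p.2)) <| by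
    rintro ⟨v, ε⟩
    have hfix : s i * v * s i = s i ↔ v = s i := by
      rw [simple_conj_eq_iff, simple_mul_simple_self, one_mul]
    by_cases hv : v = s i
    · simp [hv, simple_mul_simple_self]
    · simp only [hfix, if_neg hv, Prod.mk.injEq, and_true]
      exact (cs.simple_conj_eq_iff i).mpr rfl

theorem signPerm_apply (i : B) (v : W) (ε : ℤˣ) :
    cs.signPerm i (v, ε) = (s i * v * s i, if v = s i then -ε else ε) := rfl

theorem inv_simple_mul_simple_pow (i j : B) (k : ℕ) : ((s i * s j) ^ k)⁻¹ = (s j * s i) ^ k := by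
  rw [← inv_pow, mul_inv_rev, inv_simple, inv_simple]

theorem signPerm_mul_signPerm_pow_apply (i j : B) (k : ℕ) (v : W) (ε : ℤˣ) :
    ((cs.signPerm i * cs.signPerm j) ^ k) (v, ε) =
      ((s i * s j) ^ k * v * ((s i * s j) ^ k)⁻¹,
        ε * ∏ n ∈ Finset.range (2 * k), if v = (s j * s i) ^ n * s j then -1 else 1) := by
  induction k generalizing v ε with
  | zero => simp
  | succ k ih =>
    set c := (s i * s j) ^ k
    have hconj : ∀ u x : W, c * u * c⁻¹ = x ↔ u = (s j * s i) ^ k * x * (s i * s j) ^ k := by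
      intro u x
      rw [← cs.inv_simple_mul_simple_pow, conj_eq_iff]
    have hj : c * v * c⁻¹ = s j ↔ v = (s j * s i) ^ (2 * k) * s j := by
      rw [hconj, mul_assoc _ (s j), ← mul_pow_mul, ← mul_assoc, ← pow_add, two_mul]
    have hi : s j * (c * v * c⁻¹) * s j = s i ↔ v = (s j * s i) ^ (2 * k + 1) * s j := by
      rw [simple_conj_eq_iff, hconj, mul_assoc _ (s j * s i * s j), mul_assoc (s j * s i),
        ← mul_pow_mul, ← mul_assoc, ← mul_assoc, ← pow_succ, ← pow_add,
        show k + 1 + k = 2 * k + 1 by ring]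
    rw [pow_succ', Equiv.Perm.mul_apply, ih, Equiv.Perm.mul_apply, signPerm_apply,
      signPerm_apply, hj, hi, show 2 * (k + 1) = 2 * k + 1 + 1 by ring,
      Finset.prod_range_succ, Finset.prod_range_succ]
    refine Prod.ext ?_ ?_
    · simp only [pow_succ', c, mul_inv_rev, inv_simple]
      group
    · split_ifs <;> simp

/-- The sign changes happen at `(sⱼ sᵢ)ⁿ sⱼ`, which is periodic in `n` with period `M i j`, so
over `2 M i j` steps each point changes sign an even number of times. -/
theorem isLiftable_signPerm : M.IsLiftable cs.signPerm := by
  intro i j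
  ext ⟨v, ε⟩ : 1
  rw [signPerm_mul_signPerm_pow_apply, cs.simple_mul_simple_pow, two_mul,
    Finset.prod_range_add]
  simp only [pow_add, cs.simple_mul_simple_pow', one_mul, Int.units_mul_self, mul_one, inv_one,
    Equiv.Perm.one_apply]

noncomputable def signRep : W →* Equiv.Perm (W × ℤˣ) :=
  cs.lift ⟨cs.signPerm, cs.isLiftable_signPerm⟩

theorem signRep_simple (i : B) : cs.signRep (s i) = cs.signPerm i :=
  cs.lift_apply_simple cs.isLiftable_signPerm i

theorem signRep_wordProd (ω : List B) (v : W) (ε : ℤˣ) :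
    cs.signRep (π ω) (v, ε) = (π ω * v * (π ω)⁻¹, (-1) ^ (ris ω).count v * ε) := by
  induction ω generalizing ε with
  | nil => simp
  | cons i ω ih =>
    have hris : ris (i :: ω) = (π ω)⁻¹ * s i * π ω :: ris ω := rfl
    have hfix : π ω * v * (π ω)⁻¹ = s i ↔ (π ω)⁻¹ * s i * π ω = v := by
      rw [conj_eq_iff, eq_comm]
    rw [wordProd_cons, map_mul, Equiv.Perm.mul_apply, ih, signRep_simple, signPerm_apply, hris,
      List.count_cons]
    simp only [hfix, beq_iff_eq]
    refine Prod.ext ?_ ?_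
    · simp only [mul_inv_rev, inv_simple]
      group
    · split_ifs <;> simp [pow_succ]

theorem signRep_apply (w v : W) (ε : ℤˣ) :
    cs.signRep w (v, ε) = (w * v * w⁻¹, (cs.signRep w (v, 1)).2 * ε) := by
  obtain ⟨ω, rfl⟩ := cs.wordProd_surjective w
  simp [signRep_wordProd]

theorem signRep_reflection {t : W} (ht : cs.IsReflection t) (ε : ℤˣ) :
    cs.signRep t (t, ε) = (t, -ε) := by
  obtain ⟨v, i, rfl⟩ := ht
  have hv : v⁻¹ * (v * s i * v⁻¹) * v⁻¹⁻¹ = s i := by group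
  have hflip : cs.signPerm i (cs.signRep v⁻¹ (v * s i * v⁻¹, ε))
      = cs.signRep v⁻¹ (v * s i * v⁻¹, -ε) := by
    rw [signRep_apply, signRep_apply _ _ _ (-ε), hv, signPerm_apply, if_pos rfl,
      simple_mul_simple_self, one_mul, mul_neg]
  calc cs.signRep (v * s i * v⁻¹) (v * s i * v⁻¹, ε)
      = cs.signRep v (cs.signPerm i (cs.signRep v⁻¹ (v * s i * v⁻¹, ε))) := by
        rw [← signRep_simple, ← Equiv.Perm.mul_apply, ← Equiv.Perm.mul_apply, ← map_mul,
          ← map_mul]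
    _ = (v * s i * v⁻¹, -ε) := by
        rw [hflip, ← Equiv.Perm.mul_apply, ← map_mul, mul_inv_cancel, map_one,
          Equiv.Perm.one_apply]

/-- The strong exchange property. -/
theorem mem_rightInvSeq_of_isRightInversion {ω : List B} {t : W}
    (ht : cs.IsRightInversion (π ω) t) : t ∈ ris ω := by
  by_contra hnot
  obtain ⟨ω', hω', hω'eq⟩ := cs.exists_isReduced (π ω * t)
  have hsign : (-1 : ℤˣ) ^ (ris ω').count t = -1 := by
    have := congrArg Prod.snd (cs.signRep_wordProd ω' t 1)
    rw [← hω'eq, map_mul, Equiv.Perm.mul_apply, signRep_reflection cs ht.1, signRep_wordProd,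
      List.count_eq_zero_of_not_mem hnot] at this
    simpa using this.symm
  have hmem : t ∈ ris ω' := by
    by_contra hnot'
    rw [List.count_eq_zero_of_not_mem hnot', pow_zero] at hsign
    exact absurd hsign (by decide)
  have := (cs.isRightInversion_of_mem_rightInvSeq hω' hmem).2
  rw [← hω'eq, mul_assoc, ht.1.mul_self, mul_one] at this
  exact absurd ht.2 (lt_asymm this)

theorem exists_eraseIdx_of_isRightInversion {ω : List B} {t : W}
    (ht : cs.IsRightInversion (π ω) t) : ∃ k < ω.length, π ω * t = π (ω.eraseIdx k) := by
  obtain ⟨k, hk, rfl⟩ := List.getElem_of_mem (cs.mem_rightInvSeq_of_isRightInversion ht)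
  rw [length_rightInvSeq] at hk
  exact ⟨k, hk, by rw [← wordProd_mul_getD_rightInvSeq, List.getD_eq_getElem]⟩

/-- As `b t sᵢ = (b sᵢ)(sᵢ t sᵢ)`: conjugation by `sᵢ` maps the right inversions of `b` other
than `sᵢ` to right inversions of `b sᵢ`. -/
theorem length_mul_mul_simple_lt {b t : W} {i : B} (ht : cs.IsRightInversion b t)
    (hne : t ≠ s i) : ℓ (b * t * s i) < ℓ (b * s i) := by
  obtain ⟨ω, hω, hωeq⟩ := cs.exists_isReduced (b * s i)
  have hb : π (ω ++ [i]) = b := by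
    rw [wordProd_append, wordProd_singleton, ← hωeq, simple_mul_simple_cancel_right]
  rw [← hb] at ht
  obtain ⟨k, hk, hdel⟩ := cs.exists_eraseIdx_of_isRightInversion ht
  rw [hb] at hdel
  rw [List.length_append, List.length_singleton] at hk
  rcases Nat.lt_succ_iff_lt_or_eq.mp hk with hk | rfl
  · rw [List.eraseIdx_append_of_lt_length hk, wordProd_append, wordProd_singleton] at hdel
    rw [hdel, simple_mul_simple_cancel_right, hωeq, hω.eq]
    calc ℓ (π ω.eraseIdx k) ≤ (ω.eraseIdx k).length := cs.length_wordProd_le _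
      _ < ω.length := by rw [List.length_eraseIdx_of_lt hk]; omega
  · rw [List.eraseIdx_append_of_length_le le_rfl, Nat.sub_self, List.eraseIdx_zero, List.tail_cons,
      List.append_nil, ← hωeq] at hdel
    exact absurd (mul_left_cancel hdel) hne

theorem bruhatLE_refl (u : W) : bruhatLE cs u u := Relation.ReflTransGen.refl

theorem bruhatLE_trans {u v x : W} (huv : bruhatLE cs u v) (hvx : bruhatLE cs v x) :
    bruhatLE cs u x :=
  huv.trans hvx

theorem bruhatLE_mul_of_length_lt {u t : W} (ht : cs.IsReflection t) (h : ℓ u < ℓ (u * t)) :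
    bruhatLE cs u (u * t) :=
  Relation.ReflTransGen.single ⟨t, ht, rfl, h⟩

theorem mul_bruhatLE_of_isRightInversion {u t : W} (ht : cs.IsRightInversion u t) :
    bruhatLE cs (u * t) u := by
  have hu : u * t * t = u := by rw [mul_assoc, ht.1.mul_self, mul_one]
  have h := cs.bruhatLE_mul_of_length_lt ht.1 (u := u * t) (by rw [hu]; exact ht.2)
  rwa [hu] at h

theorem length_le_of_bruhatLE {u v : W} (h : bruhatLE cs u v) : ℓ u ≤ ℓ v := by
  induction h with
  | refl => exact le_rfl
  | tail _ hstep ih =>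
    obtain ⟨t, -, -, hlt⟩ := hstep
    omega

theorem eq_one_of_bruhatLE_one {u : W} (h : bruhatLE cs u 1) : u = 1 :=
  cs.length_eq_zero_iff.mp (Nat.le_zero.mp (cs.length_one ▸ cs.length_le_of_bruhatLE h))

/-- A single Bruhat step, by the reflection `sᵢ t sᵢ`. -/
theorem mul_simple_bruhatLE_mul_simple {a t : W} {i : B} (ht : cs.IsReflection t)
    (h : ℓ (a * s i) < ℓ (a * t * s i)) : bruhatLE cs (a * s i) (a * t * s i) := by
  have hconj : cs.IsReflection (s i * t * s i) := by
    simpa only [inv_simple] using ht.conj (s i)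
  have hmul : a * s i * (s i * t * s i) = a * t * s i := by
    simp only [mul_assoc, simple_mul_simple_cancel_left]
  rw [← hmul]
  exact cs.bruhatLE_mul_of_length_lt hconj (by rwa [hmul])

noncomputable def maxMulSimple (u : W) (i : B) : W :=
  if cs.IsRightDescent u i then u else u * s i

noncomputable def minMulSimple (u : W) (i : B) : W :=
  if cs.IsRightDescent u i then u * s i else u

theorem maxMulSimple_eq_or (u : W) (i : B) :
    cs.maxMulSimple u i = u ∨ cs.maxMulSimple u i = u * s i := by
  unfold maxMulSimple; split_ifs <;> simp

theorem minMulSimple_eq_or (u : W) (i : B) :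
    cs.minMulSimple u i = u ∨ cs.minMulSimple u i = u * s i := by
  unfold minMulSimple; split_ifs <;> simp

theorem maxMulSimple_mul_simple (u : W) (i : B) :
    cs.maxMulSimple (u * s i) i = cs.maxMulSimple u i := by
  unfold maxMulSimple
  by_cases hu : cs.IsRightDescent u i
  · rw [if_neg (cs.isRightDescent_iff_not_isRightDescent_mul.mp hu), if_pos hu,
      simple_mul_simple_cancel_right]
  · have hus : cs.IsRightDescent (u * s i) i := by
      rwa [isRightDescent_iff_not_isRightDescent_mul, simple_mul_simple_cancel_right]
    rw [if_pos hus, if_neg hu]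

theorem minMulSimple_mul_simple (u : W) (i : B) :
    cs.minMulSimple (u * s i) i = cs.minMulSimple u i := by
  unfold minMulSimple
  by_cases hu : cs.IsRightDescent u i
  · rw [if_neg (cs.isRightDescent_iff_not_isRightDescent_mul.mp hu), if_pos hu]
  · have hus : cs.IsRightDescent (u * s i) i := by
      rwa [isRightDescent_iff_not_isRightDescent_mul, simple_mul_simple_cancel_right]
    rw [if_pos hus, if_neg hu, simple_mul_simple_cancel_right]

theorem minMulSimple_maxMulSimple (u : W) (i : B) :
    cs.minMulSimple (cs.maxMulSimple u i) i = cs.minMulSimple u i := by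
  rcases cs.maxMulSimple_eq_or u i with h | h <;> rw [h]
  exact cs.minMulSimple_mul_simple u i

theorem maxMulSimple_of_isRightDescent {u : W} {i : B} (h : cs.IsRightDescent u i) :
    cs.maxMulSimple u i = u :=
  if_pos h

theorem le_maxMulSimple (u : W) (i : B) : bruhatLE cs u (cs.maxMulSimple u i) := by
  unfold maxMulSimple
  split_ifs with hu
  · exact cs.bruhatLE_refl u
  · exact cs.bruhatLE_mul_of_length_lt (cs.isReflection_simple i)
      (by rw [cs.not_isRightDescent_iff.mp hu]; omega)

theorem minMulSimple_le (u : W) (i : B) : bruhatLE cs (cs.minMulSimple u i) u := by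
  unfold minMulSimple
  split_ifs with hu
  · exact cs.mul_bruhatLE_of_isRightInversion ⟨cs.isReflection_simple i, hu⟩
  · exact cs.bruhatLE_refl u

/-- The lifting property, for a single step `a < a t`. -/
theorem lifting_mul_reflection {a t : W} {i : B} (ht : cs.IsReflection t)
    (hlt : ℓ a < ℓ (a * t)) (ha : ¬cs.IsRightDescent a i) (hat : cs.IsRightDescent (a * t) i) :
    bruhatLE cs (a * s i) (a * t) ∧ bruhatLE cs a (a * t * s i) := by
  by_cases hti : t = s i
  · subst hti
    rw [simple_mul_simple_cancel_right]
    exact ⟨cs.bruhatLE_refl _, cs.bruhatLE_refl _⟩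
  have hinv : cs.IsRightInversion (a * t) t :=
    ⟨ht, by rwa [mul_assoc, ht.mul_self, mul_one]⟩
  have hshort := cs.length_mul_mul_simple_lt hinv hti
  rw [mul_assoc a t t, ht.mul_self, mul_one] at hshort
  have hmid := cs.mul_simple_bruhatLE_mul_simple ht hshort
  exact ⟨cs.bruhatLE_trans hmid (cs.mul_bruhatLE_of_isRightInversion
      ⟨cs.isReflection_simple i, hat⟩),
    cs.bruhatLE_trans (cs.bruhatLE_mul_of_length_lt (cs.isReflection_simple i)
      (by rw [cs.not_isRightDescent_iff.mp ha]; omega)) hmid⟩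

theorem maxMulSimple_bruhatLE_maxMulSimple_mul {a t : W} (i : B) (ht : cs.IsReflection t)
    (hlt : ℓ a < ℓ (a * t)) : bruhatLE cs (cs.maxMulSimple a i) (cs.maxMulSimple (a * t) i) := by
  by_cases ha : cs.IsRightDescent a i
  · rw [cs.maxMulSimple_of_isRightDescent ha]
    exact cs.bruhatLE_trans (cs.bruhatLE_mul_of_length_lt ht hlt) (cs.le_maxMulSimple _ i)
  unfold maxMulSimple
  rw [if_neg ha]
  split_ifs with hat
  · exact (cs.lifting_mul_reflection ht hlt ha hat).1
  · apply cs.mul_simple_bruhatLE_mul_simple ht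
    rw [cs.not_isRightDescent_iff.mp ha, cs.not_isRightDescent_iff.mp hat]
    omega

theorem minMulSimple_bruhatLE_minMulSimple_mul {a t : W} (i : B) (ht : cs.IsReflection t)
    (hlt : ℓ a < ℓ (a * t)) : bruhatLE cs (cs.minMulSimple a i) (cs.minMulSimple (a * t) i) := by
  by_cases hat : cs.IsRightDescent (a * t) i
  · unfold minMulSimple
    rw [if_pos hat]
    split_ifs with ha
    · apply cs.mul_simple_bruhatLE_mul_simple ht
      have := cs.isRightDescent_iff.mp ha
      have := cs.isRightDescent_iff.mp hat
      omega
    · exact (cs.lifting_mul_reflection ht hlt ha hat).2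
  · conv_rhs => rw [minMulSimple, if_neg hat]
    exact cs.bruhatLE_trans (cs.minMulSimple_le a i) (cs.bruhatLE_mul_of_length_lt ht hlt)

theorem maxMulSimple_mono {u v : W} (h : bruhatLE cs u v) (i : B) :
    bruhatLE cs (cs.maxMulSimple u i) (cs.maxMulSimple v i) := by
  induction h with
  | refl => exact cs.bruhatLE_refl _
  | tail _ hstep ih =>
    obtain ⟨t, ht, rfl, hlt⟩ := hstep
    exact cs.bruhatLE_trans ih (cs.maxMulSimple_bruhatLE_maxMulSimple_mul i ht hlt)

theorem minMulSimple_mono {u v : W} (h : bruhatLE cs u v) (i : B) :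
    bruhatLE cs (cs.minMulSimple u i) (cs.minMulSimple v i) := by
  induction h with
  | refl => exact cs.bruhatLE_refl _
  | tail _ hstep ih =>
    obtain ⟨t, ht, rfl, hlt⟩ := hstep
    exact cs.bruhatLE_trans ih (cs.minMulSimple_bruhatLE_minMulSimple_mul i ht hlt)

theorem bruhatLE_maxMulSimple_iff {u x : W} {i : B} :
    bruhatLE cs u (cs.maxMulSimple x i) ↔ bruhatLE cs u x ∨ bruhatLE cs (u * s i) x := by
  constructor
  · intro h
    have hmin := cs.minMulSimple_mono h i
    rw [minMulSimple_maxMulSimple] at hmin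
    have hmin_le := cs.bruhatLE_trans hmin (cs.minMulSimple_le x i)
    rcases cs.minMulSimple_eq_or u i with hu | hu <;> rw [hu] at hmin_le
    · exact Or.inl hmin_le
    · exact Or.inr hmin_le
  · rintro (h | h)
    · exact cs.bruhatLE_trans h (cs.le_maxMulSimple x i)
    · have hmax := cs.maxMulSimple_mono h i
      rw [maxMulSimple_mul_simple] at hmax
      exact cs.bruhatLE_trans (cs.le_maxMulSimple u i) hmax

theorem induction_maxMulSimple {P : W → Prop} (one : P 1)
    (step : ∀ x i, P x → P (cs.maxMulSimple x i)) (x : W) : P x := by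
  induction hx : ℓ x using Nat.strong_induction_on generalizing x with
  | _ n ih =>
    by_cases hx1 : x = 1
    · exact hx1 ▸ one
    obtain ⟨i, hi⟩ := cs.exists_rightDescent_of_ne_one hx1
    have h := step (x * s i) i (ih _ (hx ▸ hi) _ rfl)
    rwa [maxMulSimple_mul_simple, maxMulSimple_of_isRightDescent cs hi] at h

theorem mul_bruhatLE_maxMulSimple {w x y z : W} {i : B} (h : bruhatLE cs (w * y) x)
    (hz : z = y ∨ z = y * s i) : bruhatLE cs (w * z) (cs.maxMulSimple x i) := by
  rw [bruhatLE_maxMulSimple_iff]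
  rcases hz with rfl | rfl
  · exact Or.inl h
  · rw [mul_assoc, simple_mul_simple_cancel_right]
    exact Or.inr h

theorem mul_mul_simple_bruhatLE {w x y : W} {i : B} (h : bruhatLE cs (w * y) x)
    (hi : cs.IsRightDescent (w * y) i) : bruhatLE cs (w * (y * s i)) x := by
  rw [← mul_assoc]
  exact cs.bruhatLE_trans (cs.mul_bruhatLE_of_isRightInversion ⟨cs.isReflection_simple i, hi⟩) h

theorem exists_least_bruhatLE_mul (w x : W) :
    ∃ ymin : W, bruhatLE cs (w * ymin) x ∧
      (∀ y : W, bruhatLE cs (w * y) x → bruhatLE cs ymin y) ∧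
      ℓ ymin + ℓ (w * ymin) = ℓ w := by
  induction x using cs.induction_maxMulSimple with
  | one =>
    refine ⟨w⁻¹, by simpa using cs.bruhatLE_refl 1, fun y hy => ?_, by simp⟩
    rw [← eq_inv_of_mul_eq_one_right (cs.eq_one_of_bruhatLE_one hy)]
    exact cs.bruhatLE_refl y
  | step x i ih =>
    obtain ⟨m, hm, hleast, hlen⟩ := ih
    refine ⟨cs.minMulSimple m i, cs.mul_bruhatLE_maxMulSimple hm (cs.minMulSimple_eq_or m i),
      fun y hy => ?_, ?_⟩
    · rcases cs.bruhatLE_maxMulSimple_iff.mp hy with hy | hy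
      · exact cs.bruhatLE_trans (cs.minMulSimple_le m i) (hleast y hy)
      · have h := cs.minMulSimple_mono (hleast (y * s i) (by rwa [← mul_assoc])) i
        rw [minMulSimple_mul_simple] at h
        exact cs.bruhatLE_trans h (cs.minMulSimple_le y i)
    · by_cases hmi : cs.IsRightDescent m i
      · have hwm : ¬cs.IsRightDescent (w * m) i := fun hwm =>
          hmi.not_ge (cs.length_le_of_bruhatLE (hleast _ (cs.mul_mul_simple_bruhatLE hm hwm)))
        unfold minMulSimple
        rw [if_pos hmi, ← mul_assoc]
        have := cs.isRightDescent_iff.mp hmi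
        have := cs.not_isRightDescent_iff.mp hwm
        omega
      · unfold minMulSimple
        rwa [if_neg hmi]

theorem exists_greatest_bruhatLE_mul (w x : W) :
    ∃ ymax : W, bruhatLE cs (w * ymax) x ∧
      (∀ y : W, bruhatLE cs (w * y) x → bruhatLE cs y ymax) ∧
      ℓ ymax = ℓ w + ℓ (w * ymax) := by
  induction x using cs.induction_maxMulSimple with
  | one =>
    refine ⟨w⁻¹, by simpa using cs.bruhatLE_refl 1, fun y hy => ?_, by simp⟩
    rw [eq_inv_of_mul_eq_one_right (cs.eq_one_of_bruhatLE_one hy)]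
    exact cs.bruhatLE_refl _
  | step x i ih =>
    obtain ⟨m, hm, hgreatest, hlen⟩ := ih
    refine ⟨cs.maxMulSimple m i, cs.mul_bruhatLE_maxMulSimple hm (cs.maxMulSimple_eq_or m i),
      fun y hy => ?_, ?_⟩
    · rcases cs.bruhatLE_maxMulSimple_iff.mp hy with hy | hy
      · exact cs.bruhatLE_trans (hgreatest y hy) (cs.le_maxMulSimple m i)
      · have h := cs.maxMulSimple_mono (hgreatest (y * s i) (by rwa [← mul_assoc])) i
        rw [maxMulSimple_mul_simple] at h
        exact cs.bruhatLE_trans (cs.le_maxMulSimple y i) h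
    · by_cases hmi : cs.IsRightDescent m i
      · rwa [maxMulSimple_of_isRightDescent cs hmi]
      · have hwm : ¬cs.IsRightDescent (w * m) i := fun hwm => by
          have h := cs.length_le_of_bruhatLE (hgreatest _ (cs.mul_mul_simple_bruhatLE hm hwm))
          rw [cs.not_isRightDescent_iff.mp hmi] at h
          omega
        unfold maxMulSimple
        rw [if_neg hmi, ← mul_assoc]
        have := cs.not_isRightDescent_iff.mp hmi
        have := cs.not_isRightDescent_iff.mp hwm
        omega

end CoxeterSystem

/-- The set `{y | w y ≤ x}` has a smallest element `y_min` and a largest element `y_max`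
for the Bruhat order, with `ℓ(y_min) = ℓ(w) - ℓ(w y_min)` and
`ℓ(y_max) = ℓ(w) + ℓ(w y_max)`. -/
theorem exists_min_max_bruhat (cs : CoxeterSystem M W) (x w : W) :
    (∃ ymin : W, bruhatLE cs (w * ymin) x ∧
      (∀ y : W, bruhatLE cs (w * y) x → bruhatLE cs ymin y) ∧
      cs.length ymin + cs.length (w * ymin) = cs.length w) ∧
    (∃ ymax : W, bruhatLE cs (w * ymax) x ∧
      (∀ y : W, bruhatLE cs (w * y) x → bruhatLE cs y ymax) ∧
      cs.length ymax = cs.length w + cs.length (w * ymax)) :=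
  ⟨cs.exists_least_bruhatLE_mul w x, cs.exists_greatest_bruhatLE_mul w x⟩
end
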